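/- arXiv:1312.0490 — 4 statements merged into one kernel-verified Lean document; each statement's English description precedes it below -/
import Mathlib

section
/- Let K be a field, let m ≥ 1 be an integer, and let c : ℤ/mℤ → Kˣ be a family of nonzero scalars. Define the K-linear endomorphism T of the space of functions v : ℤ/mℤ → K by (T v)(j) = c(j) · v(j − 1). Then the subspace of vectors fixed by T (i.e. {v | T v = v}) has dimension 1 over K if ∏_{j ∈ ℤ/mℤ} c(j) = 1, and dimension 0 otherwise. (This is the key linear-algebra step in the paper's proof of the defect formula: it computes the dimension of the fixed space of wσ on a sum of characters forming one Galois orbit.) -/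
/-!
A fixed vector `v` satisfies `v j = c j * v (j - 1)`, so walking once around the cycle gives
`v n = (c 1 ⋯ c n) * v 0` and finally `v 0 = (∏ j, c j) * v 0`. Hence a fixed vector is
determined by `v 0`, and `v 0` can be nonzero only when `∏ j, c j = 1`; in that case the
partial products themselves, read modulo `m`, form a fixed vector.
-/

open scoped Classical

open Finset

section CommMonoid

variable {M : Type*} [CommMonoid M] {m : ℕ} [NeZero m]

theorem ZMod.prod_range_natCast_add (g : ZMod m → M) (a : ℕ) :
    ∏ k ∈ range m, g ((a + k : ℕ) : ZMod m) = ∏ j : ZMod m, g j := by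
  rw [← Equiv.prod_comp (Equiv.addLeft (a : ZMod m)) g]
  refine prod_nbij' (fun k => (k : ZMod m)) ZMod.val (fun _ _ => mem_univ _)
    (fun j _ => mem_range.2 (ZMod.val_lt j)) (fun k hk => ZMod.val_cast_of_lt (mem_range.1 hk))
    (fun j _ => ZMod.natCast_zmod_val j) (fun k _ => ?_)
  simp

end CommMonoid

section CommRing

variable {R : Type*} [CommRing R] {m : ℕ}

def cyclicTwist (c : ZMod m → R) : (ZMod m → R) →ₗ[R] (ZMod m → R) :=
  LinearMap.pi fun j => c j • LinearMap.proj (j - 1)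

@[simp]
theorem cyclicTwist_apply (c : ZMod m → R) (v : ZMod m → R) (j : ZMod m) :
    cyclicTwist c v j = c j * v (j - 1) :=
  rfl

theorem mem_ker_cyclicTwist_sub_id {c : ZMod m → R} {v : ZMod m → R} :
    v ∈ LinearMap.ker (cyclicTwist c - LinearMap.id) ↔ ∀ j, v j = c j * v (j - 1) := by
  rw [LinearMap.mem_ker, LinearMap.sub_apply, LinearMap.id_apply, sub_eq_zero, funext_iff]
  exact forall_congr' fun j => eq_comm

def cyclicPartialProd (c : ZMod m → R) (n : ℕ) : R :=
  ∏ k ∈ range n, c ((k + 1 : ℕ) : ZMod m)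

theorem cyclicPartialProd_succ (c : ZMod m → R) (n : ℕ) :
    cyclicPartialProd c (n + 1) = cyclicPartialProd c n * c ((n + 1 : ℕ) : ZMod m) :=
  prod_range_succ _ _

theorem apply_natCast_eq_cyclicPartialProd_mul {c : ZMod m → R} {v : ZMod m → R}
    (hv : v ∈ LinearMap.ker (cyclicTwist c - LinearMap.id)) (n : ℕ) :
    v n = cyclicPartialProd c n * v 0 := by
  rw [mem_ker_cyclicTwist_sub_id] at hv
  induction n with
  | zero => simp [cyclicPartialProd]
  | succ n ih =>
    rw [hv, Nat.cast_succ, add_sub_cancel_right, ih, ← Nat.cast_succ, cyclicPartialProd_succ]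
    ring

variable [NeZero m]

theorem cyclicPartialProd_add_card (c : ZMod m → R) (n : ℕ) :
    cyclicPartialProd c (n + m) = cyclicPartialProd c n * ∏ j, c j := by
  rw [cyclicPartialProd, prod_range_add, ← ZMod.prod_range_natCast_add c (n + 1)]
  simp only [Nat.add_right_comm n _ 1]
  rfl

theorem eq_smul_of_mem_ker_cyclicTwist_sub_id {c : ZMod m → R} {v : ZMod m → R}
    (hv : v ∈ LinearMap.ker (cyclicTwist c - LinearMap.id)) :
    v = v 0 • fun j => cyclicPartialProd c j.val := by
  funext j
  rw [← ZMod.natCast_zmod_val j, apply_natCast_eq_cyclicPartialProd_mul hv, ZMod.natCast_zmod_val,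
    Pi.smul_apply, smul_eq_mul, mul_comm]

/-- For `∏ j, c j = 1` the partial products are `m`-periodic, so reading them off at `j.val`
is compatible with the shift `j ↦ j + 1`. -/
theorem cyclicPartialProd_val_mem_ker {c : ZMod m → R} (hc : ∏ j, c j = 1) :
    (fun j : ZMod m => cyclicPartialProd c j.val) ∈
      LinearMap.ker (cyclicTwist c - LinearMap.id) := by
  have periodic : Function.Periodic (cyclicPartialProd c) m := fun n => by
    rw [cyclicPartialProd_add_card, hc, mul_one]
  rw [mem_ker_cyclicTwist_sub_id]
  intro j
  obtain ⟨n, rfl⟩ : ∃ n : ℕ, j = ((n + 1 : ℕ) : ZMod m) :=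
    ⟨(j - 1).val, by rw [Nat.cast_succ, ZMod.natCast_zmod_val, sub_add_cancel]⟩
  rw [Nat.cast_succ, add_sub_cancel_right, ← Nat.cast_succ, ZMod.val_natCast, ZMod.val_natCast,
    periodic.map_mod_nat, periodic.map_mod_nat, cyclicPartialProd_succ, mul_comm]

theorem ker_cyclicTwist_sub_id_eq_span {c : ZMod m → R} (hc : ∏ j, c j = 1) :
    LinearMap.ker (cyclicTwist c - LinearMap.id) =
      Submodule.span R {fun j : ZMod m => cyclicPartialProd c j.val} := by
  refine le_antisymm (fun v hv => ?_) ?_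
  · rw [eq_smul_of_mem_ker_cyclicTwist_sub_id hv]
    exact Submodule.smul_mem _ _ (Submodule.mem_span_singleton_self _)
  · rw [Submodule.span_le, Set.singleton_subset_iff]
    exact cyclicPartialProd_val_mem_ker hc

theorem ker_cyclicTwist_sub_id_eq_bot [NoZeroDivisors R] {c : ZMod m → R}
    (hc : ∏ j, c j ≠ 1) : LinearMap.ker (cyclicTwist c - LinearMap.id) = ⊥ := by
  refine (Submodule.eq_bot_iff _).2 fun v hv => ?_
  have around : v 0 = (∏ j, c j) * v 0 := by
    have h := apply_natCast_eq_cyclicPartialProd_mul hv (0 + m)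
    rwa [cyclicPartialProd_add_card, cyclicPartialProd, range_zero, prod_empty, one_mul, zero_add,
      ZMod.natCast_self] at h
  have hv0 : v 0 = 0 := by
    refine (mul_eq_zero.1 (?_ : (∏ j, c j - 1) * v 0 = 0)).resolve_left (sub_ne_zero.2 hc)
    linear_combination -around
  rw [eq_smul_of_mem_ker_cyclicTwist_sub_id hv, hv0, zero_smul]

end CommRing

theorem finrank_ker_cyclicTwist_sub_id {K : Type*} [Field K] {m : ℕ} [NeZero m]
    (c : ZMod m → K) :
    Module.finrank K (LinearMap.ker (cyclicTwist c - LinearMap.id)) =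
      if ∏ j, c j = 1 then 1 else 0 := by
  split_ifs with hc
  · rw [ker_cyclicTwist_sub_id_eq_span hc]
    refine finrank_span_singleton fun h => ?_
    simpa [cyclicPartialProd] using congrFun h 0
  · rw [ker_cyclicTwist_sub_id_eq_bot hc, finrank_bot]

/-- Let `K` be a field, `m ≥ 1`, and `c : ℤ/mℤ → Kˣ`. Let `T` be the `K`-linear endomorphism
of `K^{ℤ/mℤ}` given by `(T v)(j) = c j * v (j - 1)`. Then the space of vectors fixed by `T`
has dimension `1` if `∏ j, c j = 1`, and dimension `0` otherwise. -/
theorem finrank_fixedSpace_cyclic_twist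
    (K : Type*) [Field K] (m : ℕ) [NeZero m] (c : ZMod m → Kˣ)
    (T : (ZMod m → K) →ₗ[K] (ZMod m → K))
    (hT : ∀ (v : ZMod m → K) (j : ZMod m), T v j = (c j : K) * v (j - 1)) :
    Module.finrank K (LinearMap.ker (T - LinearMap.id)) =
      if (∏ j : ZMod m, (c j : K)) = 1 then 1 else 0 := by
  obtain rfl : T = cyclicTwist fun j => (c j : K) := LinearMap.ext fun v => funext (hT v)
  exact finrank_ker_cyclicTwist_sub_id _
end

section
/- Fix integers d, h ≥ 1 and a function m : ℤ/dℤ → ℤ, and set m_tot = ∑_{τ ∈ ℤ/dℤ} m(τ). Suppose gcd(m_tot, h) = 1. Let A ⊆ ℤ/dℤ × ℤ be an EL-chart for this data. Then for every τ ∈ ℤ/dℤ, the set B_{(τ)} = {(τ, a) ∈ A | (τ, a − h) ∉ A} has exactly h elements. -/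
/-- The shift `x ↦ f(x)` on `ℤ^{(d)} = ℤ/dℤ × ℤ`, sending `(τ, a)` to `(τ+1, a + m(τ+1))`. -/
def elShift {d : ℕ} (m : ZMod d → ℤ) (x : ZMod d × ℤ) : ZMod d × ℤ :=
  (x.1 + 1, x.2 + m (x.1 + 1))

/-- Translation by `h` in the `ℤ`-coordinate on `ℤ^{(d)} = ℤ/dℤ × ℤ`. -/
def elAddH {d : ℕ} (h : ℕ) (x : ZMod d × ℤ) : ZMod d × ℤ :=
  (x.1, x.2 + (h : ℤ))

/-!
Everything happens in the fibre `S = {a | (τ, a) ∈ A}` of `A` over `τ`. It is bounded below and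
closed under `a ↦ a + h`; and since `d` applications of the shift return to `τ` having added
`m_tot`, it is also closed under `a ↦ a + m_tot`. Closure under `+ h` makes the elements of
`S \ (S + h)` exactly the least elements of `S` in their residue classes mod `h`, so reduction
mod `h` maps `S \ (S + h)` bijectively onto the residues met by `S`. As `m_tot` is a unit mod `h`,
the translates `a + k m_tot` of one element meet all `h` residues.
-/

open Finset Set

section IntSet

variable {S : Set ℤ} {h : ℕ}

lemma add_nat_mul_mem_of_mapsTo {c : ℤ} (hS : MapsTo (· + c) S S) {a : ℤ} (ha : a ∈ S) (n : ℕ) :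
    a + n * c ∈ S := by
  simpa only [add_right_iterate, nsmul_eq_mul] using hS.iterate n ha

lemma mem_of_le_of_modEq (hS : MapsTo (· + (h : ℤ)) S S) {a b : ℤ} (ha : a ∈ S) (hab : a ≤ b)
    (hmod : a ≡ b [ZMOD h]) : b ∈ S := by
  have hq : 0 ≤ (b - a) / h := Int.ediv_nonneg (by omega) (Int.natCast_nonneg h)
  have hb : b = a + ((b - a) / h).toNat * h := by
    rw [Int.toNat_of_nonneg hq, Int.ediv_mul_cancel hmod.dvd]; ring
  exact hb ▸ add_nat_mul_mem_of_mapsTo hS ha _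

lemma le_of_modEq_of_sub_notMem (hS : MapsTo (· + (h : ℤ)) S S) {a b : ℤ} (ha : a ∈ S)
    (hb : b - h ∉ S) (hmod : a ≡ b [ZMOD h]) : b ≤ a := by
  by_contra! hab
  have hh : (h : ℤ) ≤ b - a := Int.le_of_dvd (by omega) hmod.dvd
  have hmod' : a ≡ b - h [ZMOD h] := hmod.trans (Int.modEq_iff_dvd.mpr ⟨-1, by ring⟩)
  exact hb (mem_of_le_of_modEq hS ha (by omega) hmod')

lemma bijOn_intCast_setOf_sub_notMem (hh : 0 < h) (hS : MapsTo (· + (h : ℤ)) S S)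
    (hbdd : BddBelow S) :
    BijOn (Int.cast : ℤ → ZMod h) {a | a ∈ S ∧ a - h ∉ S} (Int.cast '' S) := by
  refine ⟨fun a ha => mem_image_of_mem _ ha.1, fun a ha b hb hab => ?_, ?_⟩
  · rw [ZMod.intCast_eq_intCast_iff] at hab
    exact le_antisymm (le_of_modEq_of_sub_notMem hS hb.1 ha.2 hab.symm)
      (le_of_modEq_of_sub_notMem hS ha.1 hb.2 hab)
  · rintro _ ⟨a₀, ha₀, rfl⟩
    obtain ⟨n, hn⟩ := hbdd
    obtain ⟨a, ⟨haS, hac⟩, hmin⟩ := Int.exists_least_of_bdd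
      (P := fun z => z ∈ S ∧ (z : ZMod h) = a₀) ⟨n, fun z hz => hn hz.1⟩ ⟨a₀, ha₀, rfl⟩
    refine ⟨a, ⟨haS, fun hsub => ?_⟩, hac⟩
    have := hmin (a - h) ⟨hsub, by simp [hac]⟩
    omega

lemma intCast_image_eq_univ_of_isCoprime [NeZero h] {M : ℤ} (hM : MapsTo (· + M) S S)
    (hcop : IsCoprime M h) (hne : S.Nonempty) : (Int.cast '' S : Set (ZMod h)) = univ := by
  obtain ⟨a₀, ha₀⟩ := hne
  obtain ⟨u, v, huv⟩ := hcop
  have hunit : (u : ZMod h) * M = 1 := by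
    simpa using congrArg (Int.cast : ℤ → ZMod h) huv
  refine eq_univ_of_forall fun c =>
    ⟨a₀ + ((c - a₀) * u).val * M, add_nat_mul_mem_of_mapsTo hM ha₀ _, ?_⟩
  push_cast
  rw [ZMod.natCast_zmod_val, mul_assoc, hunit]
  ring

theorem ncard_setOf_sub_notMem_of_isCoprime (hh : 0 < h) {M : ℤ} (hS : MapsTo (· + (h : ℤ)) S S)
    (hM : MapsTo (· + M) S S) (hcop : IsCoprime M h) (hbdd : BddBelow S) (hne : S.Nonempty) :
    {a | a ∈ S ∧ a - h ∉ S}.ncard = h := by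
  have : NeZero h := ⟨hh.ne'⟩
  rw [(bijOn_intCast_setOf_sub_notMem hh hS hbdd).ncard_eq,
    intCast_image_eq_univ_of_isCoprime hM hcop hne, ncard_univ, Nat.card_zmod]

end IntSet

lemma ZMod.sum_range_natCast {d : ℕ} [NeZero d] {β : Type*} [AddCommMonoid β] (g : ZMod d → β) :
    ∑ i ∈ range d, g i = ∑ x, g x := by
  refine sum_nbij' (fun i => (i : ZMod d)) ZMod.val (by simp) (by simp [ZMod.val_lt]) ?_
    (by simp) (by simp)
  intro i hi
  exact ZMod.val_natCast_of_lt (Finset.mem_range.mp hi)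

section ELChart

variable {d : ℕ} (m : ZMod d → ℤ)

lemma elShift_iterate (n : ℕ) (x : ZMod d × ℤ) :
    (elShift m)^[n] x = (x.1 + n, x.2 + ∑ i ∈ range n, m (x.1 + 1 + i)) := by
  induction n with
  | zero => simp
  | succ n ih =>
    rw [Function.iterate_succ_apply', ih, elShift, sum_range_succ]
    push_cast
    ext <;> simp only <;> ring_nf

lemma elShift_iterate_card [NeZero d] (x : ZMod d × ℤ) :
    (elShift m)^[d] x = (x.1, x.2 + ∑ τ, m τ) := by
  rw [elShift_iterate, ZMod.natCast_self, add_zero,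
    ZMod.sum_range_natCast (fun i => m (x.1 + 1 + i))]
  exact congrArg _ (congrArg _ (Equiv.sum_comp (Equiv.addLeft (x.1 + 1)) m))

variable {m} {A : Set (ZMod d × ℤ)}

lemma nonempty_fiber_of_mapsTo_elShift [NeZero d] (hf : MapsTo (elShift m) A A) (hne : A.Nonempty)
    (τ : ZMod d) : (Prod.mk τ ⁻¹' A).Nonempty := by
  obtain ⟨x, hx⟩ := hne
  have hy := hf.iterate (τ - x.1).val hx
  have hτ : ((elShift m)^[(τ - x.1).val] x).1 = τ := by
    rw [elShift_iterate, ZMod.natCast_zmod_val]; ring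
  exact ⟨_, by rwa [← hτ]⟩

lemma mapsTo_fiber_add_sum [NeZero d] (hf : MapsTo (elShift m) A A) (τ : ZMod d) :
    MapsTo (· + ∑ σ, m σ) (Prod.mk τ ⁻¹' A) (Prod.mk τ ⁻¹' A) := fun a ha => by
  have hy := hf.iterate d ha
  rwa [elShift_iterate_card] at hy

lemma mem_image_elAddH {h : ℕ} {x : ZMod d × ℤ} : x ∈ elAddH h '' A ↔ (x.1, x.2 - h) ∈ A := by
  constructor
  · rintro ⟨y, hy, rfl⟩
    simpa [elAddH] using hy
  · exact fun hx => ⟨_, hx, by simp [elAddH]⟩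

lemma setOf_mem_diff_image_elAddH_fst_eq (h : ℕ) (τ : ZMod d) :
    {x | x ∈ A \ elAddH h '' A ∧ x.1 = τ} =
      Prod.mk τ '' {a | a ∈ Prod.mk τ ⁻¹' A ∧ a - h ∉ Prod.mk τ ⁻¹' A} := by
  ext ⟨σ, a⟩
  constructor
  · rintro ⟨⟨hx, hx'⟩, rfl : σ = τ⟩
    exact ⟨a, ⟨hx, fun h' => hx' (mem_image_elAddH.mpr h')⟩, rfl⟩
  · rintro ⟨a, ⟨hx, hx'⟩, ⟨⟩⟩
    exact ⟨⟨hx, fun h' => hx' (mem_image_elAddH.mp h')⟩, rfl⟩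

end ELChart

/-- Fix `d, h ≥ 1` and `m : ℤ/dℤ → ℤ` with `gcd(∑ m(τ), h) = 1`. If `A` is an EL-chart
(nonempty, bounded below in the `ℤ`-coordinate, stable under `f` and under adding `h`),
then for every `τ` the set `B_{(τ)}` of elements of `B = A \ (A + h)` with first
coordinate `τ` has exactly `h` elements. -/
theorem elChart_card_B_tau
    (d h : ℕ) [NeZero d] (hh : 1 ≤ h) (m : ZMod d → ℤ)
    (hcop : Int.gcd (∑ τ : ZMod d, m τ) (h : ℤ) = 1)
    (A : Set (ZMod d × ℤ))
    (hne : A.Nonempty)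
    (hbdd : ∃ n : ℤ, ∀ x ∈ A, n ≤ x.2)
    (hf : ∀ x ∈ A, elShift m x ∈ A)
    (hstab : ∀ x ∈ A, elAddH h x ∈ A)
    (τ : ZMod d) :
    {x : ZMod d × ℤ | x ∈ A \ (elAddH h '' A) ∧ x.1 = τ}.ncard = h := by
  obtain ⟨n, hn⟩ := hbdd
  rw [setOf_mem_diff_image_elAddH_fst_eq, ncard_image_of_injective _ (Prod.mk_right_injective τ)]
  exact ncard_setOf_sub_notMem_of_isCoprime hh (fun a ha => hstab _ ha) (mapsTo_fiber_add_sum hf τ)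
    (Int.isCoprime_iff_gcd_eq_one.mpr hcop) ⟨n, fun a ha => hn _ ha⟩
    (nonempty_fiber_of_mapsTo_elShift hf hne τ)
end

section
/- Fix integers d, h ≥ 1 and a function m : ℤ/dℤ → ℤ. Let A ⊆ ℤ/dℤ × ℤ be a small EL-chart for this data and set B = A \ (A + h). Then for every b ∈ B exactly one of the following two alternatives holds: either f(b) ∈ B, or f(b) − h ∈ B. (This is the decomposition B = B⁺ ⊔ B⁻ used in the paper's analysis of superbasic Rapoport–Zink spaces of EL type.) -/
/-- Translation by `-h` in the `ℤ`-coordinate on `ℤ^{(d)} = ℤ/dℤ × ℤ`. -/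
def elSubH {d : ℕ} (h : ℕ) (x : ZMod d × ℤ) : ZMod d × ℤ :=
  (x.1, x.2 - (h : ℤ))

/-! If `f(b) = y + h` with `y ∈ A + h`, then smallness writes `y = f(w)` with `w ∈ A`, and since
`f` is injective and commutes with translation by `h`, `b = w + h ∈ A + h`. So `f(b) - h ∈ B`
whenever `f(b) ∈ A + h`, while otherwise `f(b) ∈ B`; the two cases are exclusive because
`f(b) - h ∈ A` means `f(b) ∈ A + h`. -/

theorem notMem_image_of_apply_eq_apply {α : Type*} {f g : α → α} (hf : Function.Injective f)
    (hcomm : ∀ x, f (g x) = g (f x)) {A : Set α} (hsmall : g '' A ⊆ f '' A) {b y : α}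
    (hb : b ∉ g '' A) (hy : g y = f b) : y ∉ g '' A := by
  rintro ⟨z, hz, rfl⟩
  obtain ⟨w, hw, hwz⟩ := hsmall ⟨z, hz, rfl⟩
  exact hb ⟨w, hw, hf (by rw [hcomm, hwz, hy])⟩

theorem elShift_injective {d : ℕ} (m : ZMod d → ℤ) : Function.Injective (elShift m) := by
  rintro ⟨τ, a⟩ ⟨σ, c⟩ hxy
  simp only [elShift, Prod.mk.injEq, add_left_inj] at hxy
  obtain ⟨rfl, hac⟩ := hxy
  rw [add_left_inj] at hac
  rw [hac]

theorem elShift_elAddH {d : ℕ} (m : ZMod d → ℤ) (h : ℕ) (x : ZMod d × ℤ) :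
    elShift m (elAddH h x) = elAddH h (elShift m x) := by
  simp only [elShift, elAddH, Prod.mk.injEq, true_and]
  ring

theorem elAddH_elSubH {d : ℕ} (h : ℕ) (x : ZMod d × ℤ) : elAddH h (elSubH h x) = x := by
  simp [elAddH, elSubH]

theorem mem_image_elAddH_iff {d : ℕ} (h : ℕ) {A : Set (ZMod d × ℤ)} {x : ZMod d × ℤ} :
    x ∈ elAddH h '' A ↔ elSubH h x ∈ A := by
  constructor
  · rintro ⟨y, hy, rfl⟩
    simpa [elAddH, elSubH] using hy
  · exact fun hx => ⟨elSubH h x, hx, elAddH_elSubH h x⟩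

theorem smallELChart_B_decomposition_general
    (d h : ℕ) (m : ZMod d → ℤ)
    (A : Set (ZMod d × ℤ))
    (hf : ∀ x ∈ A, elShift m x ∈ A)
    (hsmall : elAddH h '' A ⊆ elShift m '' A)
    (b : ZMod d × ℤ) (hb : b ∈ A \ (elAddH h '' A)) :
    Xor' (elShift m b ∈ A \ (elAddH h '' A))
         (elSubH h (elShift m b) ∈ A \ (elAddH h '' A)) := by
  obtain ⟨hbA, hbB⟩ := hb
  by_cases hfb : elShift m b ∈ elAddH h '' A
  · refine Or.inr ⟨⟨(mem_image_elAddH_iff h).1 hfb, ?_⟩, fun hfbB => hfbB.2 hfb⟩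
    exact notMem_image_of_apply_eq_apply (elShift_injective m) (elShift_elAddH m h) hsmall hbB
      (elAddH_elSubH h _)
  · exact Or.inl ⟨⟨hf b hbA, hfb⟩, fun hsubB => hfb ((mem_image_elAddH_iff h).2 hsubB.1)⟩

/-- Fix `d, h ≥ 1` and `m : ℤ/dℤ → ℤ`. Let `A` be a small EL-chart (nonempty, bounded
below in the `ℤ`-coordinate, stable under `f` and under adding `h`, with `A + h ⊆ f(A)`),
and let `B = A \ (A + h)`. Then for every `b ∈ B` exactly one of `f(b) ∈ B` and
`f(b) - h ∈ B` holds. -/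
theorem smallELChart_B_decomposition
    (d h : ℕ) [NeZero d] (hh : 1 ≤ h) (m : ZMod d → ℤ)
    (A : Set (ZMod d × ℤ))
    (hne : A.Nonempty)
    (hbdd : ∃ n : ℤ, ∀ x ∈ A, n ≤ x.2)
    (hf : ∀ x ∈ A, elShift m x ∈ A)
    (hstab : ∀ x ∈ A, elAddH h x ∈ A)
    (hsmall : elAddH h '' A ⊆ elShift m '' A)
    (b : ZMod d × ℤ) (hb : b ∈ A \ (elAddH h '' A)) :
    Xor' (elShift m b ∈ A \ (elAddH h '' A))
         (elSubH h (elShift m b) ∈ A \ (elAddH h '' A)) :=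
  smallELChart_B_decomposition_general d h m A hf hsmall b hb
end

section
/- Let h ≥ 1 be an integer and let S ⊆ ℤ be a subset that is bounded from below, satisfies S + h ⊆ S, and meets every residue class modulo h. Then the sets S \ (S + h), ℕ \ S and S ∩ {n ∈ ℤ | n < 0} are finite, and ∑_{b ∈ S \ (S+h)} b = h(h−1)/2 + h · ( #(ℕ \ S) − #(S ∩ {n ∈ ℤ | n < 0}) ). In particular, if #(ℕ \ S) = #(S ∩ {n < 0}) then ∑_{b ∈ S \ (S+h)} b = h(h−1)/2. (This is the computation by which the paper shows that the EL-chart A(M) attached to a special lattice is normalized.) -/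
/-!
Write each integer uniquely as `k * h + r` with `0 ≤ r < h`. Since `S` is bounded below, closed
under `+ h` and meets the class of `r`, the `k` with `k * h + r ∈ S` form a ray `k ≥ K r`. Hence
`S \ (S + h)` meets the class in the single point `K r * h + r`, `ℕ \ S` in `(K r)⁺` points and
`S ∩ {n < 0}` in `(K r)⁻` points. Summing over the classes,
`∑ b = ∑ r + h * ∑ K r = h (h - 1) / 2 + h * (#(ℕ \ S) - #(S ∩ {n < 0}))`.
-/

open Set

namespace Int

theorem eq_Ici_sInf_of_add_one_mem {T : Set ℤ} (hne : T.Nonempty) (hbdd : BddBelow T)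
    (hstab : ∀ k ∈ T, k + 1 ∈ T) : T = Ici (sInf T) := by
  refine Subset.antisymm (fun k hk => csInf_le hbdd hk) fun k hk => ?_
  induction k, hk using Int.leInduction with
  | base => exact csInf_mem hne hbdd
  | succ k _ ih => exact hstab k ih

theorem ncard_Ico (a b : ℤ) : (Ico a b).ncard = (b - a).toNat := by
  rw [← Finset.coe_Ico, ncard_coe_finset, card_Ico]

theorem sum_fin_val (n : ℕ) : ∑ r : Fin n, ((r : ℕ) : ℤ) = n * (n - 1) / 2 := by
  rw [Fin.sum_univ_eq_sum_range (fun i => (i : ℤ)) n]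
  rcases n with _ | n
  · simp
  · have h := congrArg (Nat.cast (R := ℤ)) (Finset.sum_range_id_mul_two (n + 1))
    push_cast at h ⊢
    rw [add_sub_cancel_right, ← h, Int.mul_ediv_cancel _ two_ne_zero]

theorem mul_add_fin_nonneg_iff {n : ℕ} {k : ℤ} (r : Fin n) :
    0 ≤ k * n + (r : ℕ) ↔ 0 ≤ k := by
  have hr : ((r : ℕ) : ℤ) < n := by exact_mod_cast r.isLt
  refine ⟨fun h => ?_, fun hk => by positivity⟩
  by_contra hk
  nlinarith

section Fibers

theorem iUnion_image_mul_add (n : ℕ) [NeZero n] (X : Set ℤ) :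
    ⋃ r : Fin n, (fun k : ℤ => k * n + (r : ℕ)) '' {k | k * n + (r : ℕ) ∈ X} = X := by
  ext x
  simp only [mem_iUnion, mem_image, mem_ofPred_eq]
  refine ⟨fun ⟨_, _, hk, hx⟩ => hx ▸ hk, fun hx => ?_⟩
  have hx' : (divModEquiv n x).1 * n + ((divModEquiv n x).2 : ℕ) = x := by
    rw [← divModEquiv_symm_apply, Equiv.symm_apply_apply]
  exact ⟨(divModEquiv n x).2, (divModEquiv n x).1, hx'.symm ▸ hx, hx'⟩

variable {n : ℕ} [NeZero n]

theorem divModEquiv_mul_add (k : ℤ) (r : Fin n) : divModEquiv n (k * n + (r : ℕ)) = (k, r) := by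
  rw [← Equiv.eq_symm_apply, divModEquiv_symm_apply]

theorem mul_add_fin_inj {k k' : ℤ} {r r' : Fin n} :
    k * n + (r : ℕ) = k' * n + (r' : ℕ) ↔ k = k' ∧ r = r' := by
  refine ⟨fun h => ?_, fun ⟨hk, hr⟩ => hk ▸ hr ▸ rfl⟩
  simpa only [divModEquiv_mul_add, Prod.mk.injEq] using congrArg (divModEquiv n) h

theorem finite_of_finite_fibers {X : Set ℤ}
    (hX : ∀ r : Fin n, {k : ℤ | k * n + (r : ℕ) ∈ X}.Finite) : X.Finite := by
  rw [← iUnion_image_mul_add n X]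
  exact finite_iUnion fun r => (hX r).image _

theorem finsum_mem_eq_sum_fibers {M : Type*} [AddCommMonoid M] (f : ℤ → M) {X : Set ℤ}
    (hX : ∀ r : Fin n, {k : ℤ | k * n + (r : ℕ) ∈ X}.Finite) :
    ∑ᶠ x ∈ X, f x =
      ∑ r : Fin n, ∑ᶠ k ∈ {k : ℤ | k * n + (r : ℕ) ∈ X}, f (k * n + (r : ℕ)) := by
  conv_lhs => rw [← iUnion_image_mul_add n X]
  rw [finsum_mem_iUnion, finsum_eq_sum_of_fintype]
  · exact Finset.sum_congr rfl fun r _ =>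
      finsum_mem_image fun k _ k' _ h => ((mul_add_fin_inj (n := n)).mp h).1
  · rintro r r' hrr'
    refine disjoint_left.mpr ?_
    rintro _ ⟨k, _, rfl⟩ ⟨k', _, h⟩
    exact hrr' ((mul_add_fin_inj (n := n)).mp h).2.symm
  · exact fun r => (hX r).image _

theorem ncard_eq_sum_ncard_fibers {X : Set ℤ}
    (hX : ∀ r : Fin n, {k : ℤ | k * n + (r : ℕ) ∈ X}.Finite) :
    X.ncard = ∑ r : Fin n, {k : ℤ | k * n + (r : ℕ) ∈ X}.ncard := by
  simpa only [finsum_one] using finsum_mem_eq_sum_fibers (fun _ => (1 : ℕ)) hX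

end Fibers

end Int

section TranslateStable

variable {n : ℕ} {S : Set ℤ}

theorem exists_fibers_eq_Ici [NeZero n] (hbdd : BddBelow S)
    (hstab : (fun s : ℤ => s + (n : ℤ)) '' S ⊆ S)
    (hfull : ∀ r : ℤ, ∃ s ∈ S, s ≡ r [ZMOD n]) :
    ∃ K : Fin n → ℤ, ∀ r : Fin n, {k : ℤ | k * n + (r : ℕ) ∈ S} = Ici (K r) := by
  refine ⟨fun r => sInf {k : ℤ | k * n + (r : ℕ) ∈ S},
    fun r => Int.eq_Ici_sInf_of_add_one_mem ?_ ?_ ?_⟩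
  · obtain ⟨s, hs, hsr⟩ := hfull r
    obtain ⟨k, hk⟩ := hsr.symm.dvd
    exact ⟨k, show k * n + (r : ℕ) ∈ S by rwa [show k * n + (r : ℕ) = s by linarith]⟩
  · obtain ⟨m, hm⟩ := hbdd
    refine ⟨min 0 (m - (r : ℕ)), fun k hk => ?_⟩
    have hn : (1 : ℤ) ≤ n := by exact_mod_cast NeZero.one_le
    have := hm hk
    by_contra
    nlinarith [min_le_left 0 (m - (r : ℕ)), min_le_right 0 (m - (r : ℕ))]
  · intro k hk
    rw [mem_ofPred_eq, show (k + 1) * n + (r : ℕ) = k * n + (r : ℕ) + n by ring]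
    exact hstab ⟨_, hk, rfl⟩

variable {r : Fin n} {K : ℤ}

theorem fiber_diff_image_add_eq (hK : {k : ℤ | k * n + (r : ℕ) ∈ S} = Ici K) :
    {k : ℤ | k * n + (r : ℕ) ∈ S \ (fun s : ℤ => s + (n : ℤ)) '' S} = {K} := by
  have hmem (k : ℤ) : k * n + (r : ℕ) ∈ S ↔ K ≤ k := Set.ext_iff.mp hK k
  ext k
  rw [mem_ofPred_eq, mem_sdiff, image_add_right, mem_preimage,
    show k * n + (r : ℕ) + -n = (k - 1) * n + (r : ℕ) by ring, hmem, hmem, mem_singleton_iff]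
  omega

theorem fiber_nonneg_diff_eq (hK : {k : ℤ | k * n + (r : ℕ) ∈ S} = Ici K) :
    {k : ℤ | k * n + (r : ℕ) ∈ {x : ℤ | 0 ≤ x} \ S} = Ico 0 K := by
  have hmem (k : ℤ) : k * n + (r : ℕ) ∈ S ↔ K ≤ k := Set.ext_iff.mp hK k
  ext k
  rw [mem_ofPred_eq, mem_sdiff, mem_ofPred_eq, Int.mul_add_fin_nonneg_iff, hmem, not_le, mem_Ico]

theorem fiber_inter_neg_eq (hK : {k : ℤ | k * n + (r : ℕ) ∈ S} = Ici K) :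
    {k : ℤ | k * n + (r : ℕ) ∈ S ∩ {x : ℤ | x < 0}} = Ico K 0 := by
  have hmem (k : ℤ) : k * n + (r : ℕ) ∈ S ↔ K ≤ k := Set.ext_iff.mp hK k
  ext k
  rw [mem_ofPred_eq, mem_inter_iff, mem_ofPred_eq, hmem, ← not_le, Int.mul_add_fin_nonneg_iff,
    not_le, mem_Ico]

end TranslateStable

/-- Let `h ≥ 1` and let `S ⊆ ℤ` be bounded from below with `S + h ⊆ S`, meeting every
residue class modulo `h`. Then `S \ (S + h)`, `ℕ \ S` and `S ∩ {n < 0}` are finite, and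
`∑_{b ∈ S \ (S+h)} b = h(h-1)/2 + h · (#(ℕ \ S) - #(S ∩ {n < 0}))`. -/
theorem sum_diff_translate_eq
    (h : ℕ) (hh : 1 ≤ h) (S : Set ℤ)
    (hbdd : ∃ n : ℤ, ∀ s ∈ S, n ≤ s)
    (hstab : (fun s : ℤ => s + (h : ℤ)) '' S ⊆ S)
    (hfull : ∀ r : ℤ, ∃ s ∈ S, s ≡ r [ZMOD (h : ℤ)]) :
    (S \ ((fun s : ℤ => s + (h : ℤ)) '' S)).Finite ∧
    ({n : ℤ | 0 ≤ n} \ S).Finite ∧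
    (S ∩ {n : ℤ | n < 0}).Finite ∧
    ∑ᶠ b ∈ S \ ((fun s : ℤ => s + (h : ℤ)) '' S), b =
      (h : ℤ) * ((h : ℤ) - 1) / 2 +
        (h : ℤ) * ((({n : ℤ | 0 ≤ n} \ S).ncard : ℤ) - ((S ∩ {n : ℤ | n < 0}).ncard : ℤ)) := by
  have : NeZero h := ⟨by omega⟩
  obtain ⟨K, hK⟩ := exists_fibers_eq_Ici hbdd hstab hfull
  have hbot := fun r => fiber_diff_image_add_eq (hK r)
  have hgap := fun r => fiber_nonneg_diff_eq (hK r)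
  have hneg := fun r => fiber_inter_neg_eq (hK r)
  have hbot_fin (r : Fin h) := (hbot r).symm ▸ finite_singleton (K r)
  have hgap_fin (r : Fin h) := (hgap r).symm ▸ finite_Ico 0 (K r)
  have hneg_fin (r : Fin h) := (hneg r).symm ▸ finite_Ico (K r) 0
  refine ⟨Int.finite_of_finite_fibers hbot_fin, Int.finite_of_finite_fibers hgap_fin,
    Int.finite_of_finite_fibers hneg_fin, ?_⟩
  simp only [Int.finsum_mem_eq_sum_fibers _ hbot_fin, Int.ncard_eq_sum_ncard_fibers hgap_fin,
    Int.ncard_eq_sum_ncard_fibers hneg_fin, hbot, hgap, hneg, finsum_mem_singleton, Int.ncard_Ico,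
    sub_zero, zero_sub]
  push_cast
  rw [← Finset.sum_sub_distrib, Finset.sum_add_distrib, ← Finset.sum_mul, Int.sum_fin_val]
  simp only [Int.toNat_sub_toNat_neg]
  ring
end
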